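/- Let m ≥ 4 be an integer, let π be a permutation of {0,1,…,m−3}, and let e_i, f_i ∈ Z_2 for 0 ≤ i ≤ m−3. Let a = Ψ_{2^{m−2}−1}(g^0) and b = Ψ_{2^{m−2}−1}(g^1), sequences of length N = 2^{m−1}+2. Then for every integer τ with 2^{m−2}+2^{π(m−3)} < τ ≤ N−1, the aperiodic autocorrelation sum satisfies ρ_a(τ)+ρ_b(τ) ∈ {0, 4, −4}; in particular, whenever it is nonzero its magnitude is exactly 4. -/

import Mathlib

open Finset

/-- The `j`-th binary digit of the integer `i`, as an element of `ZMod 2`. -/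
def bitZ (i j : ℕ) : ZMod 2 := ((i / 2 ^ j) % 2 : ℕ)

/-- The generalized Boolean function `ζ^d` of the construction (in variables `x_0,…,x_{m-3}`). -/
def zeta (m : ℕ) (π : ℕ → ℕ) (d : ZMod 2) (x : ℕ → ZMod 2) : ZMod 2 :=
  (∑ α ∈ Finset.range (m - 3), x (π α) * x (π (α + 1))) + d * x (π (m - 3))

/-- The generalized Boolean function `η^d` of the construction. -/
def eta (m : ℕ) (π : ℕ → ℕ) (d : ZMod 2) (x : ℕ → ZMod 2) : ZMod 2 :=
  (∑ α ∈ Finset.range (m - 3), (1 - x (π α)) * (1 - x (π (α + 1))))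
    + (1 - d) * x (π (m - 3))

/-- The generalized Boolean function `g^d` of the construction (in `m` variables). -/
def gbf (m : ℕ) (π : ℕ → ℕ) (e f : ℕ → ZMod 2) (d : ZMod 2) (x : ℕ → ZMod 2) : ZMod 2 :=
  x (m - 2) * (1 - x (m - 1)) * zeta m π d x
    + (1 - x (m - 2)) * x (m - 1) * eta m π d x
    + d * (1 - x (m - 2)) * (1 - x (m - 1))
    + x (m - 2) * x (m - 1)
    + (∑ i ∈ Finset.range (m - 2), e i * x i)
    + (∑ i ∈ Finset.range (m - 2), f i * (1 - x i))

/-- The ±1 sequence `Ψ(F)` associated with a generalized Boolean function: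
its `i`-th entry is `(-1)^{F(r_{i,0}, r_{i,1}, …)}`. -/
def Psi (F : (ℕ → ZMod 2) → ZMod 2) (i : ℕ) : ℤ := (-1) ^ (F (bitZ i)).val

/-- The truncated sequence `Ψ_L(F)`, obtained by deleting the first (and last) `L`
entries of `Ψ(F)`: its `k`-th entry is the `(L+k)`-th entry of `Ψ(F)`. -/
def PsiT (F : (ℕ → ZMod 2) → ZMod 2) (L : ℕ) (k : ℕ) : ℤ := Psi F (L + k)

/-- Aperiodic autocorrelation of a length-`N` sequence `a` at time shift `τ`. -/
def rho (N : ℕ) (a : ℕ → ℤ) (τ : ℕ) : ℤ :=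
  ∑ k ∈ Finset.range (N - τ), a k * a (k + τ)


/-!
Write `M = 2 ^ (m - 2)` and `τ = M + t`. After truncation both sequences consist of the last entry
of the first quarter of `Ψ(g^d)`, its second and third quarters, and the first entry of its fourth
quarter, so for `τ > M` every product `a_k a_{k+τ}` pairs an entry `u` of the second quarter with
the entry `u + t` of the third, except the two boundary products at `k = 0` and `k = N - τ - 1`.

On the second and third quarters `g^1 - g^0 = x_{π(m-3)}`, so summing over `d` kills a product
unless `u` and `u + t` agree in bit `π(m-3)`. The remaining interior products cancel in pairs: if
`β` is the largest index with bit `π β` of `u` and `u + t` different, flipping bit `π (β + 1)`,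
where they agree, in both keeps their difference equal to `t` and changes `ζ⁰(u) + η⁰(u + t)` by
`1`, because each quadratic form changes by its two neighbouring path terms while the linear parts
cancel. Since `M - t` is the bitwise complement of `t - 1`, the two boundary products share the
factor `1 - (-1)^{bit π(m-3) of t - 1}`, so their sum is `0` or `±4`.
-/

def sgn (z : ZMod 2) : ℤ := (-1) ^ z.val

lemma sgn_add (z w : ZMod 2) : sgn (z + w) = sgn z * sgn w := by
  revert z w; decide

lemma Psi_mul_Psi (F : (ℕ → ZMod 2) → ZMod 2) (i j : ℕ) :
    Psi F i * Psi F j = sgn (F (bitZ i) + F (bitZ j)) :=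
  (sgn_add _ _).symm

lemma bitZ_eq_toNat_testBit (i j : ℕ) : bitZ i j = (i.testBit j).toNat := by
  rw [bitZ, Nat.toNat_testBit]

lemma bitZ_eq_bitZ_iff {x y i j : ℕ} : bitZ x i = bitZ y j ↔ x.testBit i = y.testBit j := by
  rw [bitZ_eq_toNat_testBit, bitZ_eq_toNat_testBit]
  cases x.testBit i <;> cases y.testBit j <;> decide

lemma bitZ_xor_two_pow (u p : ℕ) : bitZ (u ^^^ 2 ^ p) = bitZ u + Pi.single p 1 := by
  funext j
  simp only [bitZ_eq_toNat_testBit, Nat.testBit_xor, Nat.testBit_two_pow, Pi.add_apply,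
    Pi.single_apply]
  rcases eq_or_ne j p with rfl | h
  · cases u.testBit j
    · simp
    · simp; decide
  · cases u.testBit j <;> simp [h, h.symm]

lemma bitZ_two_pow_mul_add {n u : ℕ} (hu : u < 2 ^ n) (q j : ℕ) :
    bitZ (2 ^ n * q + u) j = if j < n then bitZ u j else bitZ q (j - n) := by
  simp only [bitZ_eq_toNat_testBit, Nat.testBit_two_pow_mul_add q hu]
  split_ifs <;> rfl

lemma bitZ_two_pow_sub_succ {n v : ℕ} (hv : v < 2 ^ n) {j : ℕ} (hj : j < n) :
    bitZ (2 ^ n - (v + 1)) j = bitZ v j + 1 := by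
  simp only [bitZ_eq_toNat_testBit, Nat.testBit_two_pow_sub_succ hv, hj, decide_true,
    Bool.true_and]
  cases v.testBit j <;> decide

lemma xor_two_pow_eq_add_two_pow {x p : ℕ} (h : x.testBit p = false) :
    x ^^^ 2 ^ p = x + 2 ^ p := by
  have hlow : x % 2 ^ (p + 1) < 2 ^ p := by
    have : x / 2 ^ p % 2 = 0 := by simpa [Nat.testBit_eq_decide_div_mod_eq] using h
    rw [Nat.mod_pow_succ, this, mul_zero, add_zero]
    exact Nat.mod_lt _ (Nat.two_pow_pos p)
  apply Nat.eq_of_testBit_eq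
  intro j
  rw [Nat.testBit_xor, Nat.testBit_two_pow, Nat.add_comm x]
  rcases lt_trichotomy j p with hj | rfl | hj
  · simp [Nat.testBit_two_pow_add_gt hj, hj.ne']
  · simp [Nat.testBit_two_pow_add_eq, h]
  · obtain ⟨i, rfl⟩ : ∃ i, j = i + (p + 1) := ⟨j - (p + 1), by omega⟩
    have hdiv : (2 ^ p + x) / 2 ^ (p + 1) = x / 2 ^ (p + 1) := by
      have h2 : 2 ^ (p + 1) = 2 * 2 ^ p := pow_succ' 2 p
      have hx : 2 ^ p + x = 2 ^ (p + 1) * (x / 2 ^ (p + 1)) + (2 ^ p + x % 2 ^ (p + 1)) := by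
        have := Nat.div_add_mod x (2 ^ (p + 1)); omega
      rw [hx, Nat.mul_add_div (Nat.two_pow_pos _),
        Nat.div_eq_of_lt (show 2 ^ p + x % 2 ^ (p + 1) < 2 ^ (p + 1) by omega), add_zero]
    rw [Nat.testBit_add, Nat.testBit_add, hdiv]
    simp only [decide_eq_false (show p ≠ i + (p + 1) by omega), Bool.bne_false]

lemma xor_two_pow_add_of_testBit_eq {u t p : ℕ} (h : u.testBit p = (u + t).testBit p) :
    (u ^^^ 2 ^ p) + t = (u + t) ^^^ 2 ^ p := by
  cases hb : u.testBit p
  · rw [xor_two_pow_eq_add_two_pow hb, xor_two_pow_eq_add_two_pow (h ▸ hb)]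
    omega
  · have hadd : ∀ x, x.testBit p = true → x = (x ^^^ 2 ^ p) + 2 ^ p := fun x hx => by
      rw [← xor_two_pow_eq_add_two_pow (by simp [hx]), Nat.xor_assoc, Nat.xor_self, Nat.xor_zero]
    have hu := hadd u hb
    have hw := hadd (u + t) (h ▸ hb)
    omega

def linPart (m : ℕ) (e f : ℕ → ZMod 2) (x : ℕ → ZMod 2) : ZMod 2 :=
  (∑ i ∈ range (m - 2), e i * x i) + ∑ i ∈ range (m - 2), f i * (1 - x i)

section Quadrants

variable {m : ℕ} {π : ℕ → ℕ} {e f : ℕ → ZMod 2} {d : ZMod 2} {x y : ℕ → ZMod 2}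

lemma zeta_congr (hm : 3 ≤ m) (hπ : Set.MapsTo π (Set.Iio (m - 2)) (Set.Iio (m - 2)))
    (h : ∀ j < m - 2, x j = y j) : zeta m π d x = zeta m π d y := by
  have hxy : ∀ α ≤ m - 3, x (π α) = y (π α) := fun α hα => h _ (hπ (by simp; omega))
  unfold zeta
  rw [hxy _ le_rfl, sum_congr rfl fun α hα => by
    rw [hxy α (by simp at hα; omega), hxy (α + 1) (by simp at hα; omega)]]

lemma eta_congr (hm : 3 ≤ m) (hπ : Set.MapsTo π (Set.Iio (m - 2)) (Set.Iio (m - 2)))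
    (h : ∀ j < m - 2, x j = y j) : eta m π d x = eta m π d y := by
  have hxy : ∀ α ≤ m - 3, x (π α) = y (π α) := fun α hα => h _ (hπ (by simp; omega))
  unfold eta
  rw [hxy _ le_rfl, sum_congr rfl fun α hα => by
    rw [hxy α (by simp at hα; omega), hxy (α + 1) (by simp at hα; omega)]]

lemma linPart_congr (h : ∀ j < m - 2, x j = y j) : linPart m e f x = linPart m e f y := by
  unfold linPart
  congr 1 <;> exact sum_congr rfl fun i hi => by rw [h i (mem_range.1 hi)]

lemma gbf_bitZ_two_pow_mul_add (hm : 3 ≤ m)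
    (hπ : Set.MapsTo π (Set.Iio (m - 2)) (Set.Iio (m - 2))) {u : ℕ} (hu : u < 2 ^ (m - 2)) (q : ℕ) :
    gbf m π e f d (bitZ (2 ^ (m - 2) * q + u)) =
      bitZ q 0 * (1 - bitZ q 1) * zeta m π d (bitZ u)
        + (1 - bitZ q 0) * bitZ q 1 * eta m π d (bitZ u)
        + d * (1 - bitZ q 0) * (1 - bitZ q 1) + bitZ q 0 * bitZ q 1
        + linPart m e f (bitZ u) := by
  have hlow : ∀ j < m - 2, bitZ (2 ^ (m - 2) * q + u) j = bitZ u j := fun j hj => by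
    rw [bitZ_two_pow_mul_add hu, if_pos hj]
  have h2 : bitZ (2 ^ (m - 2) * q + u) (m - 2) = bitZ q 0 := by
    rw [bitZ_two_pow_mul_add hu, if_neg (lt_irrefl _), Nat.sub_self]
  have h1 : bitZ (2 ^ (m - 2) * q + u) (m - 1) = bitZ q 1 := by
    rw [bitZ_two_pow_mul_add hu, if_neg (by omega), show m - 1 - (m - 2) = 1 by omega]
  rw [gbf, h2, h1, zeta_congr hm hπ hlow, eta_congr hm hπ hlow, add_assoc _ (∑ _ ∈ _, _),
    ← linPart, linPart_congr hlow]

lemma zeta_eq_zeta_zero_add : zeta m π d x = zeta m π 0 x + d * x (π (m - 3)) := by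
  simp only [zeta]; ring

lemma eta_eq_eta_zero_add : eta m π d x = eta m π 0 x + d * x (π (m - 3)) := by
  simp only [eta]; grind

variable (hm : 3 ≤ m) (hπ : Set.MapsTo π (Set.Iio (m - 2)) (Set.Iio (m - 2))) {u : ℕ}
  (hu : u < 2 ^ (m - 2))
include hm hπ hu

lemma gbf_bitZ_of_lt : gbf m π e f d (bitZ u) = d + linPart m e f (bitZ u) := by
  have h := gbf_bitZ_two_pow_mul_add (e := e) (f := f) (d := d) hm hπ hu 0
  simp only [mul_zero, zero_add, show bitZ 0 0 = 0 from rfl, show bitZ 0 1 = 0 from rfl] at h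
  rw [h]
  ring

lemma gbf_bitZ_two_pow_add :
    gbf m π e f d (bitZ (2 ^ (m - 2) + u)) =
      zeta m π 0 (bitZ u) + d * bitZ u (π (m - 3)) + linPart m e f (bitZ u) := by
  rw [← mul_one (2 ^ (m - 2)), gbf_bitZ_two_pow_mul_add hm hπ hu, zeta_eq_zeta_zero_add]
  simp only [show bitZ 1 0 = 1 from rfl, show bitZ 1 1 = 0 from rfl]
  ring

lemma gbf_bitZ_two_pow_mul_two_add :
    gbf m π e f d (bitZ (2 ^ (m - 2) * 2 + u)) =
      eta m π 0 (bitZ u) + d * bitZ u (π (m - 3)) + linPart m e f (bitZ u) := by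
  rw [gbf_bitZ_two_pow_mul_add hm hπ hu, eta_eq_eta_zero_add]
  simp only [show bitZ 2 0 = 0 from rfl, show bitZ 2 1 = 1 from rfl]
  ring

omit hu in
lemma gbf_bitZ_two_pow_mul_three :
    gbf m π e f d (bitZ (2 ^ (m - 2) * 3)) = 1 + linPart m e f (bitZ 0) := by
  have h := gbf_bitZ_two_pow_mul_add (e := e) (f := f) (d := d) hm hπ (Nat.two_pow_pos _) 3
  simp only [add_zero, show bitZ 3 0 = 1 from rfl, show bitZ 3 1 = 1 from rfl] at h
  rw [h]
  ring

end Quadrants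

lemma sum_range_mul_succ_of_eq_add_ite {R : Type*} [CommRing R] {n β : ℕ} (hβ : β < n) (c : R)
    {y y' : ℕ → R} (hy : ∀ α ≤ n, y' α = y α + if α = β + 1 then c else 0) :
    ∑ α ∈ range n, y' α * y' (α + 1) =
      ∑ α ∈ range n, y α * y (α + 1) + c * (y β + if β + 1 < n then y (β + 2) else 0) := by
  have hterm : ∀ α ∈ range n, y' α * y' (α + 1) = y α * y (α + 1)
      + ((if α = β then c * y β else 0) + if α = β + 1 then c * y (β + 2) else 0) := by
    intro α hα
    rw [mem_range] at hα
    rw [hy α hα.le, hy (α + 1) hα]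
    split_ifs <;> first | omega | (subst_vars; ring)
  rw [sum_congr rfl hterm, sum_add_distrib, sum_add_distrib, sum_ite_eq', sum_ite_eq',
    if_pos (mem_range.2 hβ)]
  simp only [mem_range]
  split_ifs <;> ring

section Flip

variable {m : ℕ} {π : ℕ → ℕ} {e f : ℕ → ZMod 2} {β : ℕ} (x : ℕ → ZMod 2)

lemma add_single_apply_of_injOn (hπ : Set.InjOn π (Set.Iio (m - 2))) {α : ℕ} (hα : α < m - 2)
    (hβ : β + 1 < m - 2) :
    (x + Pi.single (π (β + 1)) 1 : ℕ → ZMod 2) (π α) = x (π α) + if α = β + 1 then 1 else 0 := by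
  simp only [Pi.add_apply, Pi.single_apply, hπ.eq_iff hα hβ]

lemma zeta_zero_add_single (hπ : Set.InjOn π (Set.Iio (m - 2))) (hβ : β < m - 3) :
    zeta m π 0 (x + Pi.single (π (β + 1)) 1) =
      zeta m π 0 x + (x (π β) + if β + 1 < m - 3 then x (π (β + 2)) else 0) := by
  simp only [zeta, zero_mul, add_zero]
  refine (sum_range_mul_succ_of_eq_add_ite hβ 1 fun α hα => ?_).trans (by rw [one_mul])
  exact add_single_apply_of_injOn x hπ (by omega) (by omega)

lemma eta_zero_add_single (hπ : Set.InjOn π (Set.Iio (m - 2))) (hβ : β < m - 3) :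
    eta m π 0 (x + Pi.single (π (β + 1)) 1) =
      eta m π 0 x - (1 - x (π β) + if β + 1 < m - 3 then 1 - x (π (β + 2)) else 0)
        + if β + 1 = m - 3 then 1 else 0 := by
  simp only [eta, sub_zero, one_mul]
  rw [sum_range_mul_succ_of_eq_add_ite hβ (-1) (y := fun α => 1 - x (π α)) fun α hα => by
      rw [add_single_apply_of_injOn x hπ (by omega) (by omega)]; split_ifs <;> ring,
    add_single_apply_of_injOn x hπ (by omega) (by omega)]
  split_ifs <;> first | omega | ring

lemma linPart_add_single {p : ℕ} (hp : p < m - 2) :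
    linPart m e f (x + Pi.single p 1) = linPart m e f x + (e p - f p) := by
  simp only [linPart, Pi.add_apply, mul_add, mul_sub, sub_add_eq_sub_sub, sum_add_distrib,
    sum_sub_distrib, Pi.single_apply, mul_ite, mul_one, mul_zero, sum_ite_eq', mem_range, hp,
    if_true]
  ring

end Flip

def crossPhase (m : ℕ) (π : ℕ → ℕ) (e f : ℕ → ZMod 2) (x y : ℕ → ZMod 2) : ZMod 2 :=
  zeta m π 0 x + linPart m e f x + (eta m π 0 y + linPart m e f y)

lemma zmod_two_eq_add_one_of_ne : ∀ {a b : ZMod 2}, a ≠ b → a = b + 1 := by decide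

lemma crossPhase_add_single {m : ℕ} {π : ℕ → ℕ} (e f : ℕ → ZMod 2) {x y : ℕ → ZMod 2} {β : ℕ}
    (hπ : Set.InjOn π (Set.Iio (m - 2))) (hβ : β < m - 3) (hne : x (π β) ≠ y (π β))
    (heq : β + 1 < m - 3 → x (π (β + 2)) = y (π (β + 2))) (hp : π (β + 1) < m - 2) :
    crossPhase m π e f (x + Pi.single (π (β + 1)) 1) (y + Pi.single (π (β + 1)) 1) =
      crossPhase m π e f x y + 1 := by
  rw [crossPhase, crossPhase, zeta_zero_add_single x hπ hβ, eta_zero_add_single y hπ hβ,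
    linPart_add_single x hp, linPart_add_single y hp, zmod_two_eq_add_one_of_ne hne]
  by_cases hlt : β + 1 < m - 3
  · rw [if_pos hlt, if_pos hlt, if_neg hlt.ne, heq hlt]
    grind
  · rw [if_neg hlt, if_neg hlt, if_pos (by omega)]
    grind

def lastDiff (m : ℕ) (π : ℕ → ℕ) (u w : ℕ) : ℕ :=
  Nat.findGreatest (fun γ => u.testBit (π γ) ≠ w.testBit (π γ)) (m - 3)

lemma lastDiff_xor (m : ℕ) (π : ℕ → ℕ) (u w k : ℕ) :
    lastDiff m π (u ^^^ k) (w ^^^ k) = lastDiff m π u w := by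
  simp only [lastDiff, Nat.testBit_xor, ne_eq, Bool.xor_left_inj]

lemma lastDiff_spec {m : ℕ} {π : ℕ → ℕ} (hπ : Set.SurjOn π (Set.Iio (m - 2)) (Set.Iio (m - 2)))
    {u w : ℕ} (hne : u ≠ w) (hu : u < 2 ^ (m - 2)) (hw : w < 2 ^ (m - 2))
    (htop : u.testBit (π (m - 3)) = w.testBit (π (m - 3))) :
    lastDiff m π u w < m - 3 ∧ u.testBit (π (lastDiff m π u w)) ≠ w.testBit (π (lastDiff m π u w)) ∧
      ∀ γ, lastDiff m π u w < γ → γ ≤ m - 3 → u.testBit (π γ) = w.testBit (π γ) := by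
  obtain ⟨j, hj⟩ := Nat.exists_testBit_ne_of_ne hne
  have hjlt : j < m - 2 := by
    by_contra! hle
    exact hj (by rw [Nat.testBit_lt_two_pow (hu.trans_le (Nat.pow_le_pow_right two_pos hle)),
      Nat.testBit_lt_two_pow (hw.trans_le (Nat.pow_le_pow_right two_pos hle))])
  obtain ⟨γ, hγ, rfl⟩ := hπ hjlt
  have hspec := Nat.findGreatest_spec (P := fun γ => u.testBit (π γ) ≠ w.testBit (π γ))
    (show γ ≤ m - 3 by simp at hγ; omega) hj
  refine ⟨lt_of_le_of_ne (Nat.findGreatest_le _) fun h => by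
    rw [lastDiff] at h; rw [h] at hspec; exact hspec htop, hspec,
    fun γ' h1 h2 => ?_⟩
  by_contra h
  exact Nat.findGreatest_is_greatest h1 h2 h

section Interior

variable {m : ℕ} {π : ℕ → ℕ} (e f : ℕ → ZMod 2)

lemma crossPhase_xor_lastDiff (hπ : Set.BijOn π (Set.Iio (m - 2)) (Set.Iio (m - 2))) {u w : ℕ}
    (hne : u ≠ w) (hu : u < 2 ^ (m - 2)) (hw : w < 2 ^ (m - 2))
    (htop : u.testBit (π (m - 3)) = w.testBit (π (m - 3))) :
    crossPhase m π e f (bitZ (u ^^^ 2 ^ π (lastDiff m π u w + 1)))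
        (bitZ (w ^^^ 2 ^ π (lastDiff m π u w + 1))) =
      crossPhase m π e f (bitZ u) (bitZ w) + 1 := by
  obtain ⟨hlt, hdiff, hsame⟩ := lastDiff_spec hπ.surjOn hne hu hw htop
  rw [bitZ_xor_two_pow, bitZ_xor_two_pow]
  refine crossPhase_add_single e f hπ.injOn hlt (mt bitZ_eq_bitZ_iff.1 hdiff)
    (fun h => bitZ_eq_bitZ_iff.2 (hsame _ (by omega) (by omega))) (hπ.mapsTo ?_)
  simp only [Set.mem_Iio]; omega

lemma sum_sgn_crossPhase_eq_zero (hπ : Set.BijOn π (Set.Iio (m - 2)) (Set.Iio (m - 2))) {t : ℕ}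
    (ht : 0 < t) :
    ∑ u ∈ range (2 ^ (m - 2) - t), sgn (crossPhase m π e f (bitZ u) (bitZ (u + t)))
      * (1 + sgn (bitZ u (π (m - 3)) + bitZ (u + t) (π (m - 3)))) = 0 := by
  set c := π (m - 3)
  have hflip : ∀ u ∈ range (2 ^ (m - 2) - t), u.testBit c = (u + t).testBit c →
      let p := π (lastDiff m π u (u + t) + 1)
      (u ^^^ 2 ^ p) + t = (u + t) ^^^ 2 ^ p ∧ p < m - 2 := by
    intro u hu htop
    rw [mem_range] at hu
    obtain ⟨hlt, -, hsame⟩ :=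
      lastDiff_spec hπ.surjOn (by omega : u ≠ u + t) (by omega) (by omega) htop
    refine ⟨xor_two_pow_add_of_testBit_eq (hsame _ (by omega) (by omega)), hπ.mapsTo ?_⟩
    simp only [Set.mem_Iio]; omega
  have hzero : ∀ u, u.testBit c ≠ (u + t).testBit c →
      1 + sgn (bitZ u c + bitZ (u + t) c) = 0 := fun u htop => by
    rw [zmod_two_eq_add_one_of_ne (mt bitZ_eq_bitZ_iff.1 htop)]
    generalize bitZ (u + t) c = a
    revert a; decide
  refine sum_involution (fun u _ => if u.testBit c = (u + t).testBit c then
    u ^^^ 2 ^ π (lastDiff m π u (u + t) + 1) else u) ?_ ?_ ?_ ?_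
  · intro u hu
    split_ifs with htop
    · obtain ⟨hadd, -⟩ := hflip u hu htop
      rw [mem_range] at hu
      rw [hadd, crossPhase_xor_lastDiff e f hπ (by omega) (by omega) (by omega) htop,
        bitZ_xor_two_pow, bitZ_xor_two_pow, Pi.add_apply, Pi.add_apply]
      have h : ∀ a b s : ZMod 2, a + s + (b + s) = a + b := by decide
      rw [h, sgn_add _ 1, show sgn 1 = -1 from rfl]
      ring
    · rw [hzero u htop, mul_zero, add_zero]
  · intro u hu hne
    split_ifs with htop
    · simp
    · exact absurd (by rw [hzero u htop, mul_zero]) hne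
  · intro u hu
    split_ifs with htop
    · obtain ⟨hadd, hp⟩ := hflip u hu htop
      rw [mem_range] at hu ⊢
      have := Nat.xor_lt_two_pow (show u + t < 2 ^ (m - 2) by omega)
        (Nat.pow_lt_pow_right one_lt_two hp)
      omega
    · exact hu
  · intro u hu
    by_cases htop : u.testBit c = (u + t).testBit c
    · obtain ⟨hadd, -⟩ := hflip u hu htop
      simp [htop, hadd, lastDiff_xor]
    · simp [htop]

end Interior

def pairProd (m : ℕ) (π : ℕ → ℕ) (e f : ℕ → ZMod 2) (i j : ℕ) : ℤ :=
  Psi (gbf m π e f 0) i * Psi (gbf m π e f 0) j + Psi (gbf m π e f 1) i * Psi (gbf m π e f 1) j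

lemma rho_add_rho_eq_sum_pairProd (m : ℕ) (π : ℕ → ℕ) (e f : ℕ → ZMod 2) (N L τ : ℕ) :
    rho N (PsiT (gbf m π e f 0) L) τ + rho N (PsiT (gbf m π e f 1) L) τ =
      ∑ k ∈ range (N - τ), pairProd m π e f (L + k) (L + (k + τ)) := by
  simp only [rho, PsiT, pairProd, sum_add_distrib]

section Regions

variable {m : ℕ} {π : ℕ → ℕ} {e f : ℕ → ZMod 2}

lemma pairProd_eq_of_phase {i j : ℕ} (A B : ZMod 2)
    (h : ∀ d, gbf m π e f d (bitZ i) + gbf m π e f d (bitZ j) = A + d * B) :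
    pairProd m π e f i j = sgn A * (1 + sgn B) := by
  rw [pairProd, Psi_mul_Psi, Psi_mul_Psi, h, h, zero_mul, add_zero, one_mul, sgn_add]
  ring

variable (hm : 3 ≤ m) (hπ : Set.MapsTo π (Set.Iio (m - 2)) (Set.Iio (m - 2)))
include hm hπ

lemma pairProd_two_pow_add {u w : ℕ} (hu : u < 2 ^ (m - 2)) (hw : w < 2 ^ (m - 2)) :
    pairProd m π e f (2 ^ (m - 2) + u) (2 ^ (m - 2) * 2 + w) =
      sgn (crossPhase m π e f (bitZ u) (bitZ w)) *
        (1 + sgn (bitZ u (π (m - 3)) + bitZ w (π (m - 3)))) :=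
  pairProd_eq_of_phase _ _ fun d => by
    rw [gbf_bitZ_two_pow_add hm hπ hu, gbf_bitZ_two_pow_mul_two_add hm hπ hw, crossPhase]
    ring

lemma exists_pairProd_two_pow_sub_one {v : ℕ} (hv : v < 2 ^ (m - 2)) :
    ∃ A, pairProd m π e f (2 ^ (m - 2) - 1) (2 ^ (m - 2) * 2 + v) =
      sgn A * (1 + sgn (bitZ v (π (m - 3)) + 1)) :=
  ⟨_, pairProd_eq_of_phase
    (linPart m e f (bitZ (2 ^ (m - 2) - 1)) + eta m π 0 (bitZ v) + linPart m e f (bitZ v)) _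
    fun d => by
    rw [gbf_bitZ_of_lt hm hπ (Nat.sub_lt (Nat.two_pow_pos _) one_pos),
      gbf_bitZ_two_pow_mul_two_add hm hπ hv]
    ring⟩

lemma exists_pairProd_two_pow_mul_three {v : ℕ} (hv : v < 2 ^ (m - 2)) :
    ∃ A, pairProd m π e f (2 ^ (m - 2) + v) (2 ^ (m - 2) * 3) =
      sgn A * (1 + sgn (bitZ v (π (m - 3)))) :=
  ⟨_, pairProd_eq_of_phase
    (zeta m π 0 (bitZ v) + linPart m e f (bitZ v) + 1 + linPart m e f (bitZ 0)) _
    fun d => by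
    rw [gbf_bitZ_two_pow_add hm hπ hv, gbf_bitZ_two_pow_mul_three hm hπ]
    ring⟩

lemma pairProd_two_pow_sub_one_two_pow_mul_three :
    pairProd m π e f (2 ^ (m - 2) - 1) (2 ^ (m - 2) * 3) = 0 := by
  rw [pairProd_eq_of_phase (1 + linPart m e f (bitZ (2 ^ (m - 2) - 1)) + linPart m e f (bitZ 0)) 1
    fun d => by
      rw [gbf_bitZ_of_lt hm hπ (Nat.sub_lt (Nat.two_pow_pos _) one_pos),
        gbf_bitZ_two_pow_mul_three hm hπ]
      ring, show (1 : ℤ) + sgn 1 = 0 from rfl, mul_zero]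

end Regions

lemma sum_pairProd_eq_boundary {m : ℕ} (hm : 3 ≤ m) {π : ℕ → ℕ}
    (hπ : Set.BijOn π (Set.Iio (m - 2)) (Set.Iio (m - 2))) (e f : ℕ → ZMod 2) {t : ℕ}
    (ht : 0 < t) (htM : t ≤ 2 ^ (m - 2)) :
    ∑ k ∈ range (2 ^ (m - 2) + 2 - t),
        pairProd m π e f (2 ^ (m - 2) - 1 + k) (2 ^ (m - 2) - 1 + (k + (2 ^ (m - 2) + t))) =
      pairProd m π e f (2 ^ (m - 2) - 1) (2 ^ (m - 2) * 2 + (t - 1))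
        + pairProd m π e f (2 ^ (m - 2) + (2 ^ (m - 2) - t)) (2 ^ (m - 2) * 3) := by
  set M := 2 ^ (m - 2)
  have hM : 0 < M := Nat.two_pow_pos _
  have hinterior : ∑ u ∈ range (M - t),
      pairProd m π e f (M - 1 + (u + 1)) (M - 1 + (u + 1 + (M + t))) = 0 := by
    rw [← sum_sgn_crossPhase_eq_zero e f hπ ht]
    refine sum_congr rfl fun u hu => ?_
    rw [mem_range] at hu
    rw [show M - 1 + (u + 1) = M + u by omega,
      show M - 1 + (u + 1 + (M + t)) = M * 2 + (u + t) by omega,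
      pairProd_two_pow_add hm hπ.mapsTo (by omega) (by omega)]
  rw [show M + 2 - t = M - t + 1 + 1 by omega, sum_range_succ, sum_range_succ', hinterior,
    zero_add, add_zero, show M - 1 + (0 + (M + t)) = M * 2 + (t - 1) by omega,
    show M - 1 + (M - t + 1) = M + (M - t) by omega,
    show M - 1 + (M - t + 1 + (M + t)) = M * 3 by omega, add_comm]

lemma pairProd_boundary_mem {m : ℕ} (hm : 3 ≤ m) {π : ℕ → ℕ}
    (hπ : Set.MapsTo π (Set.Iio (m - 2)) (Set.Iio (m - 2))) (e f : ℕ → ZMod 2) {v : ℕ}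
    (hv : v < 2 ^ (m - 2)) :
    pairProd m π e f (2 ^ (m - 2) - 1) (2 ^ (m - 2) * 2 + v)
        + pairProd m π e f (2 ^ (m - 2) + (2 ^ (m - 2) - (v + 1))) (2 ^ (m - 2) * 3) ∈
      ({0, 4, -4} : Set ℤ) := by
  obtain ⟨A, hA⟩ := exists_pairProd_two_pow_sub_one (e := e) (f := f) hm hπ hv
  obtain ⟨A', hA'⟩ := exists_pairProd_two_pow_mul_three (e := e) (f := f) hm hπ
    (v := 2 ^ (m - 2) - (v + 1)) (by omega)
  rw [hA, hA', bitZ_two_pow_sub_succ hv (hπ (show m - 3 ∈ Set.Iio (m - 2) by simp; omega))]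
  clear hA hA'
  generalize bitZ v (π (m - 3)) = b
  simp only [Set.mem_insert_iff, Set.mem_singleton_iff]
  revert A A' b
  decide

lemma abs_eq_four_of_mem {x : ℤ} (hx : x ∈ ({0, 4, -4} : Set ℤ)) (hne : x ≠ 0) : |x| = 4 := by
  rcases hx with rfl | rfl | rfl <;> simp_all

/-- Outside the ZCZ, i.e. for `2^{m-2} + 2^{π(m-3)} < τ ≤ N-1`,
the aperiodic autocorrelation sum of the constructed pair lies in `{0, 4, -4}`;
in particular its magnitude is exactly `4` whenever it is nonzero. -/
theorem ebzcp_out_of_zone (m : ℕ) (hm : 4 ≤ m) (π : ℕ → ℕ)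
    (hπ : Set.BijOn π (Set.Iio (m - 2)) (Set.Iio (m - 2)))
    (e f : ℕ → ZMod 2)
    (N : ℕ) (hN : N = 2 ^ (m - 1) + 2)
    (a b : ℕ → ℤ)
    (ha : a = PsiT (gbf m π e f 0) (2 ^ (m - 2) - 1))
    (hb : b = PsiT (gbf m π e f 1) (2 ^ (m - 2) - 1)) :
    ∀ τ : ℕ, 2 ^ (m - 2) + 2 ^ (π (m - 3)) < τ → τ ≤ N - 1 →
      rho N a τ + rho N b τ ∈ ({0, 4, -4} : Set ℤ) ∧
        (rho N a τ + rho N b τ ≠ 0 → |rho N a τ + rho N b τ| = 4) := by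
  intro τ hτ hτN
  subst hN ha hb
  set M := 2 ^ (m - 2)
  have hM : 2 ^ (m - 1) = M * 2 := by rw [← pow_succ]; congr 1; omega
  have hpos : 0 < 2 ^ π (m - 3) := Nat.two_pow_pos _
  obtain ⟨t, rfl⟩ : ∃ t, τ = M + t := ⟨τ - M, by omega⟩
  have ht : 0 < t := by omega
  rw [rho_add_rho_eq_sum_pairProd, show 2 ^ (m - 1) + 2 - (M + t) = M + 2 - t by omega]
  suffices h : ∑ k ∈ range (M + 2 - t),
      pairProd m π e f (M - 1 + k) (M - 1 + (k + (M + t))) ∈ ({0, 4, -4} : Set ℤ) from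
    ⟨h, abs_eq_four_of_mem h⟩
  rcases (show t = M + 1 ∨ t ≤ M by omega) with rfl | htM
  · rw [show M + 2 - (M + 1) = 1 by omega, sum_range_one,
      show M - 1 + (0 + (M + (M + 1))) = M * 3 by omega, add_zero,
      pairProd_two_pow_sub_one_two_pow_mul_three (by omega) hπ.mapsTo]
    simp
  · rw [sum_pairProd_eq_boundary (by omega) hπ e f ht htM,
      show M - t = M - (t - 1 + 1) by omega]
    exact pairProd_boundary_mem (by omega) hπ.mapsTo e f (by omega)
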